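/- Let r ≥ 3 be an odd integer. If S_r(x) = n for some positive integer x, where n is twice an odd number greater than 1, then x is a prime power p^a with p an odd prime and p > r; moreover either a = 1 and n + r = p, or a ≥ 2 and n = p^{a−1}(p − r). -/

import Mathlib

/-! For odd `r > 1`, every prime `p > r` is odd, so each local factor
`p ^ (a - 1) * (p - r)` of `S_r(x)` is even, and `2 ^ ω(x)` divides `S_r(x)`. When
`S_r(x) = 2 * m` with `m` odd, this forces `ω(x) = 1`, i.e. `x = p ^ a`, and the value
`p ^ (a - 1) * (p - r)` at a prime power gives the two cases. -/

/-- The `r`-th Schemmel totient function: multiplicative, with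
`S_r(p^a) = 0` if `p ≤ r` and `S_r(p^a) = p^(a-1) * (p - r)` if `p > r`. -/
def schemmel (r n : ℕ) : ℕ :=
  n.factorization.prod (fun p a => if p ≤ r then 0 else p ^ (a - 1) * (p - r))

lemma schemmel_prime_pow {r p a : ℕ} (hp : p.Prime) (ha : a ≠ 0) :
    schemmel r (p ^ a) = if p ≤ r then 0 else p ^ (a - 1) * (p - r) := by
  rw [schemmel, hp.factorization_pow, Finsupp.prod, Finsupp.support_single _ ha,
    Finset.prod_singleton, Finsupp.single_eq_same]

lemma schemmel_of_primeFactors_eq_empty {r x : ℕ} (hx : x.primeFactors = ∅) :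
    schemmel r x = 1 := by
  rw [schemmel, Finsupp.prod, Nat.support_factorization, hx, Finset.prod_empty]

lemma lt_of_mem_primeFactors_of_schemmel_ne_zero {r x p : ℕ} (h : schemmel r x ≠ 0)
    (hp : p ∈ x.primeFactors) : r < p := by
  by_contra hpr
  rw [schemmel, Finsupp.prod, Nat.support_factorization] at h
  exact h (Finset.prod_eq_zero hp (if_pos (not_lt.mp hpr)))

lemma two_pow_card_primeFactors_dvd_schemmel {r : ℕ} (hr : Odd r) (hr1 : 1 < r) (x : ℕ) :
    2 ^ x.primeFactors.card ∣ schemmel r x := by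
  by_cases h0 : schemmel r x = 0
  · rw [h0]
    exact dvd_zero _
  rw [← Finset.prod_const, schemmel, Finsupp.prod, Nat.support_factorization]
  refine Finset.prod_dvd_prod_of_dvd _ _ fun p hp => ?_
  have hrp := lt_of_mem_primeFactors_of_schemmel_ne_zero h0 hp
  have hpodd : Odd p := (Nat.prime_of_mem_primeFactors hp).odd_of_ne_two (by omega)
  rw [if_neg hrp.not_ge]
  exact (Nat.Odd.sub_odd hpodd hr).two_dvd.mul_left _

lemma isPrimePow_of_schemmel_eq_two_mul_odd {r x m : ℕ} (hr : Odd r) (hr1 : 1 < r)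
    (hm : Odd m) (h : schemmel r x = 2 * m) : IsPrimePow x := by
  have hdvd := two_pow_card_primeFactors_dvd_schemmel hr hr1 x
  rw [h] at hdvd
  have hcard_le : x.primeFactors.card ≤ 1 := by
    by_contra! hcard
    obtain ⟨k, hk⟩ := (pow_dvd_pow 2 hcard).trans hdvd
    obtain ⟨j, rfl⟩ := hm
    omega
  have hcard_ne : x.primeFactors.card ≠ 0 := by
    intro hcard
    rw [schemmel_of_primeFactors_eq_empty (Finset.card_eq_zero.mp hcard)] at h
    omega
  exact isPrimePow_iff_card_primeFactors_eq_one.mpr (by omega)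

theorem structure_of_preimage_two_mul_odd_general (r x n m : ℕ) (hrodd : Odd r) (hr3 : 3 ≤ r)
    (hm : Odd m) (hn : n = 2 * m)
    (h : schemmel r x = n) :
    ∃ p a : ℕ, p.Prime ∧ Odd p ∧ r < p ∧ 0 < a ∧ x = p ^ a ∧
      ((a = 1 ∧ n + r = p) ∨ (2 ≤ a ∧ n = p ^ (a - 1) * (p - r))) := by
  subst hn
  obtain ⟨p, a, hp, ha, rfl⟩ :=
    (isPrimePow_nat_iff _).mp (isPrimePow_of_schemmel_eq_two_mul_odd hrodd (by omega) hm h)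
  rw [schemmel_prime_pow hp ha.ne'] at h
  split_ifs at h with hpr
  · linarith [hm.pos]
  refine ⟨p, a, hp, hp.odd_of_ne_two (by omega), by omega, ha, rfl, ?_⟩
  rcases Nat.lt_or_ge a 2 with ha1 | ha2
  · obtain rfl : a = 1 := by omega
    rw [Nat.sub_self, pow_zero, one_mul] at h
    exact Or.inl ⟨rfl, by omega⟩
  · exact Or.inr ⟨ha2, h.symm⟩

theorem structure_of_preimage_two_mul_odd (r x n m : ℕ) (hrodd : Odd r) (hr3 : 3 ≤ r)
    (hx : 0 < x) (hm : Odd m) (hm1 : 1 < m) (hn : n = 2 * m)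
    (h : schemmel r x = n) :
    ∃ p a : ℕ, p.Prime ∧ Odd p ∧ r < p ∧ 0 < a ∧ x = p ^ a ∧
      ((a = 1 ∧ n + r = p) ∨ (2 ≤ a ∧ n = p ^ (a - 1) * (p - r))) :=
  structure_of_preimage_two_mul_odd_general r x n m hrodd hr3 hm hn h
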